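/- arXiv:2311.00944 — 6 statements merged into one kernel-verified Lean document; each statement's English description precedes it below -/
import Mathlib

section
/- Let p > l. Then: (i) for all y ∈ ℝ^{d2} and z, z' ∈ ℝ^{d1}, ‖x*(y,z) − x*(y,z')‖ ≤ (p/(p−l))·‖z − z'‖; (ii) for all y, y' ∈ ℝ^{d2} and z ∈ ℝ^{d1}, ‖x*(y,z) − x*(y',z)‖ ≤ ((l+p)/(p−l))·‖y − y'‖; (iii) if Y ⊆ ℝ^{d2} is nonempty, convex and compact and x*(z) denotes the unique minimizer over ℝ^{d1} of the (p−l)-strongly convex function x ↦ max_{y∈Y} f̂(x,y,z), then for all z, z' ∈ ℝ^{d1}, ‖x*(z) − x*(z')‖ ≤ (p/(p−l))·‖z − z'‖. -/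
/-!
Parts (i) and (ii) come from the first-order condition `∇ₓf(x*, y) = p (z - x*)`: subtracting
two instances and using that `∇ₓf` is `l`-Lipschitz gives
`(p - l) ‖x₁ - x₂‖ ≤ p ‖z₁ - z₂‖ + l ‖y₁ - y₂‖`.

For (iii) the objective need not be differentiable. Instead, `∇ₓf̂(·, y, z)` is
`(p - l)`-strongly monotone, so every `f̂(·, y, z)` is `(p - l)`-strongly convex, and so is their
supremum over `Y`, which equals `G + (p/2)‖· - z‖²` with `G = sup_Y f`. Adding the
quadratic-growth inequalities of the two minimizers, the values of `G` cancel and the quadratic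
terms leave `(p - l) ‖x₁ - x₂‖² ≤ p ⟪x₁ - x₂, z - z'⟫`.
-/

open Set Metric
open scoped RealInnerProductSpace

noncomputable def gradx {d1 d2 : ℕ}
    (f : EuclideanSpace ℝ (Fin d1) → EuclideanSpace ℝ (Fin d2) → ℝ)
    (x : EuclideanSpace ℝ (Fin d1)) (y : EuclideanSpace ℝ (Fin d2)) :
    EuclideanSpace ℝ (Fin d1) :=
  gradient (fun x' => f x' y) x

noncomputable def grady {d1 d2 : ℕ}
    (f : EuclideanSpace ℝ (Fin d1) → EuclideanSpace ℝ (Fin d2) → ℝ)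
    (x : EuclideanSpace ℝ (Fin d1)) (y : EuclideanSpace ℝ (Fin d2)) :
    EuclideanSpace ℝ (Fin d2) :=
  gradient (fun y' => f x y') y

/-- `f` is differentiable and `l`-smooth: the gradient is `l`-Lipschitz with respect to the
Euclidean norm on the product space (stated in squared form). -/
def IsLSmooth {d1 d2 : ℕ} (l : ℝ)
    (f : EuclideanSpace ℝ (Fin d1) → EuclideanSpace ℝ (Fin d2) → ℝ) : Prop :=
  Differentiable ℝ (fun w : EuclideanSpace ℝ (Fin d1) × EuclideanSpace ℝ (Fin d2) => f w.1 w.2) ∧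
  ∀ x₁ x₂ y₁ y₂,
    ‖gradx f x₁ y₁ - gradx f x₂ y₂‖ ^ 2 + ‖grady f x₁ y₁ - grady f x₂ y₂‖ ^ 2
      ≤ l ^ 2 * (‖x₁ - x₂‖ ^ 2 + ‖y₁ - y₂‖ ^ 2)

/-- `f̂(x, y, z) = f(x, y) + (p/2)‖x − z‖²`. -/
noncomputable def fhat {d1 d2 : ℕ}
    (f : EuclideanSpace ℝ (Fin d1) → EuclideanSpace ℝ (Fin d2) → ℝ) (p : ℝ)
    (x : EuclideanSpace ℝ (Fin d1)) (y : EuclideanSpace ℝ (Fin d2))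
    (z : EuclideanSpace ℝ (Fin d1)) : ℝ :=
  f x y + p / 2 * ‖x - z‖ ^ 2

open Filter

section Convexity

variable {E : Type*} [NormedAddCommGroup E] [InnerProductSpace ℝ E] [CompleteSpace E]

theorem convexOn_univ_of_inner_gradient_sub_nonneg {h : E → ℝ} {G : E → E}
    (hG : ∀ x, HasGradientAt h (G x) x) (hmono : ∀ u v, 0 ≤ ⟪G u - G v, u - v⟫) :
    ConvexOn ℝ univ h := by
  refine ⟨convex_univ, fun x _ y _ a b ha hb hab => ?_⟩
  have hline : ∀ t : ℝ, HasDerivAt (fun t : ℝ => h (x + t • (y - x)))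
      ⟪G (x + t • (y - x)), y - x⟫ t := fun t => by
    have hpath : HasDerivAt (fun t : ℝ => x + t • (y - x)) (y - x) t := by
      simpa using ((hasDerivAt_id t).smul_const (y - x)).const_add x
    exact (hG _).hasFDerivAt.comp_hasDerivAt t hpath
  have hderiv_mono : Monotone fun t : ℝ => ⟪G (x + t • (y - x)), y - x⟫ := by
    intro s t hst
    have hst' := hmono (x + t • (y - x)) (x + s • (y - x))
    rw [show x + t • (y - x) - (x + s • (y - x)) = (t - s) • (y - x) by module,
      real_inner_smul_right, inner_sub_left] at hst'
    rcases hst.eq_or_lt with rfl | hlt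
    · rfl
    · exact sub_nonneg.1 (nonneg_of_mul_nonneg_right hst' (sub_pos.2 hlt))
  have hconv : ConvexOn ℝ univ fun t : ℝ => h (x + t • (y - x)) :=
    Monotone.convexOn_univ_of_deriv (fun t => (hline t).differentiableAt)
      (by rwa [funext fun t => (hline t).deriv])
  have hseg := hconv.2 (mem_univ 0) (mem_univ 1) ha hb hab
  rw [show a • x + b • y = x + b • (y - x) by rw [eq_sub_of_add_eq hab]; module]
  simpa using hseg

theorem strongConvexOn_univ_of_inner_gradient_sub_ge {h : E → ℝ} {G : E → E} {m : ℝ}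
    (hG : ∀ x, HasGradientAt h (G x) x) (hmono : ∀ u v, m * ‖u - v‖ ^ 2 ≤ ⟪G u - G v, u - v⟫) :
    StrongConvexOn univ m h := by
  refine strongConvexOn_iff_convex.2 (convexOn_univ_of_inner_gradient_sub_nonneg
    (G := fun x => G x - m • x) (fun x => ?_) fun u v => ?_)
  · rw [hasGradientAt_iff_hasFDerivAt]
    refine ((hG x).hasFDerivAt.fun_sub
      ((hasStrictFDerivAt_norm_sq x).hasFDerivAt.const_mul (m / 2))).congr_fderiv ?_
    ext v
    simp only [sub_apply, smul_apply, innerSL_apply_apply,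
      InnerProductSpace.toDual_apply_apply, inner_sub_left, real_inner_smul_left, smul_eq_mul]
    ring
  · rw [show G u - m • u - (G v - m • v) = (G u - G v) - m • (u - v) by module, inner_sub_left,
      real_inner_smul_left, real_inner_self_eq_norm_sq]
    linarith [hmono u v]

end Convexity

section StrongConvexity

variable {E : Type*} [NormedAddCommGroup E] [NormedSpace ℝ E] {s : Set E} {m : ℝ}

theorem strongConvexOn_csSup_image (hs : Convex ℝ s) {ι : Type*} {Y : Set ι}
    (hY : Y.Nonempty) {F : ι → E → ℝ} (hF : ∀ y ∈ Y, StrongConvexOn s m (F y))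
    (hbdd : ∀ x ∈ s, BddAbove ((fun y => F y x) '' Y)) :
    StrongConvexOn s m fun x => sSup ((fun y => F y x) '' Y) := by
  refine ⟨hs, fun x hx x' hx' a b ha hb hab => csSup_le (hY.image _) ?_⟩
  rintro _ ⟨y, hy, rfl⟩
  have hx_le := le_csSup (hbdd x hx) (mem_image_of_mem _ hy)
  have hx'_le := le_csSup (hbdd x' hx') (mem_image_of_mem _ hy)
  calc F y (a • x + b • x')
      ≤ a • F y x + b • F y x' - a * b * (m / 2 * ‖x - x'‖ ^ 2) := (hF y hy).2 hx hx' ha hb hab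
    _ ≤ _ := by gcongr

theorem StrongConvexOn.add_mul_sq_norm_sub_le_of_isMinOn {f : E → ℝ} {x₀ x : E}
    (hf : StrongConvexOn s m f) (hmin : IsMinOn f s x₀) (hx₀ : x₀ ∈ s) (hx : x ∈ s) :
    f x₀ + m / 2 * ‖x - x₀‖ ^ 2 ≤ f x := by
  have hsub : Ioo 0 1 ⊆ {t : ℝ | f x₀ + (1 - t) * (m / 2 * ‖x - x₀‖ ^ 2) ≤ f x} := by
    rintro t ⟨ht0, ht1⟩
    have hmid := hf.2 hx₀ hx (sub_nonneg.2 ht1.le) ht0.le (sub_add_cancel 1 t)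
    have hle := hmin (hf.1 hx₀ hx (sub_nonneg.2 ht1.le) ht0.le (sub_add_cancel 1 t))
    rw [norm_sub_rev] at hmid
    simp only [smul_eq_mul, mem_ofPred_eq] at hmid hle ⊢
    nlinarith
  have hclosed : IsClosed {t : ℝ | f x₀ + (1 - t) * (m / 2 * ‖x - x₀‖ ^ 2) ≤ f x} :=
    isClosed_le (by fun_prop) continuous_const
  -- let `t → 0`
  have h0 : (0 : ℝ) ∈ closure (Ioo 0 1) := by simp [closure_Ioo zero_ne_one]
  simpa using hclosed.closure_subset_iff.2 hsub h0

end StrongConvexity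

section Proximal

variable {E : Type*} [NormedAddCommGroup E] [InnerProductSpace ℝ E]

theorem mul_norm_sub_le_of_strongConvexOn_add_sq_norm_sub {G : E → ℝ} {p m : ℝ} (hp : 0 ≤ p)
    (hG : ∀ z, StrongConvexOn univ m fun x => G x + p / 2 * ‖x - z‖ ^ 2) {x₁ x₂ z₁ z₂ : E}
    (h₁ : ∀ x, G x₁ + p / 2 * ‖x₁ - z₁‖ ^ 2 ≤ G x + p / 2 * ‖x - z₁‖ ^ 2)
    (h₂ : ∀ x, G x₂ + p / 2 * ‖x₂ - z₂‖ ^ 2 ≤ G x + p / 2 * ‖x - z₂‖ ^ 2) :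
    m * ‖x₁ - x₂‖ ≤ p * ‖z₁ - z₂‖ := by
  have hgrowth₁ := (hG z₁).add_mul_sq_norm_sub_le_of_isMinOn (fun x _ => h₁ x)
    (mem_univ _) (mem_univ x₂)
  have hgrowth₂ := (hG z₂).add_mul_sq_norm_sub_le_of_isMinOn (fun x _ => h₂ x)
    (mem_univ _) (mem_univ x₁)
  have hpolar : ‖x₂ - z₁‖ ^ 2 - ‖x₁ - z₁‖ ^ 2 + ‖x₁ - z₂‖ ^ 2 - ‖x₂ - z₂‖ ^ 2
      = 2 * ⟪x₁ - x₂, z₁ - z₂⟫ := by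
    simp only [norm_sub_sq_real, inner_sub_left, inner_sub_right]
    ring
  have hcs := real_inner_le_norm (x₁ - x₂) (z₁ - z₂)
  rw [norm_sub_rev x₂ x₁] at hgrowth₁
  have hsq : m * ‖x₁ - x₂‖ * ‖x₁ - x₂‖ ≤ p * ‖z₁ - z₂‖ * ‖x₁ - x₂‖ := by
    nlinarith [mul_le_mul_of_nonneg_left hcs hp]
  rcases (norm_nonneg (x₁ - x₂)).eq_or_lt with hzero | hpos
  · rw [← hzero, mul_zero]
    positivity
  · exact le_of_mul_le_mul_right hsq hpos

end Proximal

namespace IsLSmooth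

variable {d1 d2 : ℕ} {f : EuclideanSpace ℝ (Fin d1) → EuclideanSpace ℝ (Fin d2) → ℝ} {l p : ℝ}

theorem hasGradientAt_gradx (hf : IsLSmooth l f) (x : EuclideanSpace ℝ (Fin d1))
    (y : EuclideanSpace ℝ (Fin d2)) : HasGradientAt (fun x' => f x' y) (gradx f x y) x := by
  have hdiff := (hf.1 (x, y)).comp x
    ((differentiableAt_id (𝕜 := ℝ) (x := x)).prodMk (differentiableAt_const (𝕜 := ℝ) y))
  exact hdiff.hasGradientAt

theorem continuous_apply (hf : IsLSmooth l f) (x : EuclideanSpace ℝ (Fin d1)) :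
    Continuous (f x) :=
  hf.1.continuous.comp (Continuous.prodMk_right x)

theorem norm_gradx_sub_le (hf : IsLSmooth l f) (hl : 0 ≤ l) (x₁ x₂ : EuclideanSpace ℝ (Fin d1))
    (y₁ y₂ : EuclideanSpace ℝ (Fin d2)) :
    ‖gradx f x₁ y₁ - gradx f x₂ y₂‖ ≤ l * ‖x₁ - x₂‖ + l * ‖y₁ - y₂‖ := by
  refine (pow_le_pow_iff_left₀ (norm_nonneg _) (by positivity) two_ne_zero).1 ?_
  nlinarith [hf.2 x₁ x₂ y₁ y₂, sq_nonneg ‖grady f x₁ y₁ - grady f x₂ y₂‖,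
    mul_nonneg (sq_nonneg l) (mul_nonneg (norm_nonneg (x₁ - x₂)) (norm_nonneg (y₁ - y₂)))]

theorem hasGradientAt_fhat (hf : IsLSmooth l f) (x z : EuclideanSpace ℝ (Fin d1))
    (y : EuclideanSpace ℝ (Fin d2)) :
    HasGradientAt (fun x => fhat f p x y z) (gradx f x y + p • (x - z)) x := by
  rw [hasGradientAt_iff_hasFDerivAt]
  refine ((hf.hasGradientAt_gradx x y).hasFDerivAt.fun_add
    (((hasFDerivAt_id x).sub_const z).norm_sq.const_mul (p / 2))).congr_fderiv ?_
  ext v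
  simp
  ring

theorem gradx_eq_of_forall_fhat_le (hf : IsLSmooth l f) {x z : EuclideanSpace ℝ (Fin d1)}
    {y : EuclideanSpace ℝ (Fin d2)} (hmin : ∀ x', fhat f p x y z ≤ fhat f p x' y z) :
    gradx f x y = p • (z - x) := by
  have hzero := IsLocalMin.hasFDerivAt_eq_zero (Eventually.of_forall hmin)
    (hf.hasGradientAt_fhat x z y).hasFDerivAt
  rw [map_eq_zero_iff _ (InnerProductSpace.toDual ℝ _).injective] at hzero
  rw [← sub_eq_zero, ← hzero]
  module

theorem sub_mul_norm_sub_le_of_forall_fhat_le (hf : IsLSmooth l f) (hl : 0 ≤ l) (hp : 0 ≤ p)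
    {x₁ x₂ z₁ z₂ : EuclideanSpace ℝ (Fin d1)} {y₁ y₂ : EuclideanSpace ℝ (Fin d2)}
    (h₁ : ∀ x, fhat f p x₁ y₁ z₁ ≤ fhat f p x y₁ z₁)
    (h₂ : ∀ x, fhat f p x₂ y₂ z₂ ≤ fhat f p x y₂ z₂) :
    (p - l) * ‖x₁ - x₂‖ ≤ p * ‖z₁ - z₂‖ + l * ‖y₁ - y₂‖ := by
  have hdiff : p • (x₁ - x₂) = p • (z₁ - z₂) - (gradx f x₁ y₁ - gradx f x₂ y₂) := by
    rw [hf.gradx_eq_of_forall_fhat_le h₁, hf.gradx_eq_of_forall_fhat_le h₂]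
    module
  have htriangle := norm_sub_le (p • (z₁ - z₂)) (gradx f x₁ y₁ - gradx f x₂ y₂)
  rw [← hdiff, norm_smul_of_nonneg hp, norm_smul_of_nonneg hp] at htriangle
  linarith [hf.norm_gradx_sub_le hl x₁ x₂ y₁ y₂]

theorem strongConvexOn_fhat (hf : IsLSmooth l f) (hl : 0 ≤ l) (y : EuclideanSpace ℝ (Fin d2))
    (z : EuclideanSpace ℝ (Fin d1)) : StrongConvexOn univ (p - l) fun x => fhat f p x y z := by
  refine strongConvexOn_univ_of_inner_gradient_sub_ge (fun x => hf.hasGradientAt_fhat x z y)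
    fun u v => ?_
  rw [show gradx f u y + p • (u - z) - (gradx f v y + p • (v - z))
      = (gradx f u y - gradx f v y) + p • (u - v) by module, inner_add_left,
    real_inner_smul_left, real_inner_self_eq_norm_sq]
  have hcs := neg_le_of_abs_le (abs_real_inner_le_norm (gradx f u y - gradx f v y) (u - v))
  have hlip := hf.norm_gradx_sub_le hl u v y y
  rw [sub_self, norm_zero, mul_zero, add_zero] at hlip
  nlinarith [mul_le_mul_of_nonneg_right hlip (norm_nonneg (u - v))]

end IsLSmooth

theorem csSup_image_fhat {d1 d2 : ℕ}
    {f : EuclideanSpace ℝ (Fin d1) → EuclideanSpace ℝ (Fin d2) → ℝ} {p : ℝ}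
    {Y : Set (EuclideanSpace ℝ (Fin d2))} (hY : Y.Nonempty) {x : EuclideanSpace ℝ (Fin d1)}
    (hbdd : BddAbove (f x '' Y)) (z : EuclideanSpace ℝ (Fin d1)) :
    sSup ((fun y => fhat f p x y z) '' Y) = sSup (f x '' Y) + p / 2 * ‖x - z‖ ^ 2 := by
  have hshift := (OrderIso.addRight (p / 2 * ‖x - z‖ ^ 2)).map_csSup' (hY.image _) hbdd
  rw [image_image] at hshift
  exact hshift.symm

theorem statement0_general {d1 d2 : ℕ} (l p : ℝ) (hl : 0 < l) (hpl : l < p)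
    (f : EuclideanSpace ℝ (Fin d1) → EuclideanSpace ℝ (Fin d2) → ℝ)
    (hf : IsLSmooth l f)
    -- `x*(y, z)`: the (unique) minimizer of `x ↦ f̂(x, y, z)` over `ℝ^{d1}`
    (xstar : EuclideanSpace ℝ (Fin d2) → EuclideanSpace ℝ (Fin d1) → EuclideanSpace ℝ (Fin d1))
    (hxstar : ∀ y z x, fhat f p (xstar y z) y z ≤ fhat f p x y z)
    -- `Y` is nonempty, convex and compact
    (Y : Set (EuclideanSpace ℝ (Fin d2))) (hYne : Y.Nonempty)
    (hYcomp : IsCompact Y)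
    -- `x*(z)`: the (unique) minimizer of `x ↦ max_{y ∈ Y} f̂(x, y, z)` over `ℝ^{d1}`
    (xstarz : EuclideanSpace ℝ (Fin d1) → EuclideanSpace ℝ (Fin d1))
    (hxstarz : ∀ z x, sSup ((fun y => fhat f p (xstarz z) y z) '' Y)
        ≤ sSup ((fun y => fhat f p x y z) '' Y)) :
    (∀ (y : EuclideanSpace ℝ (Fin d2)) (z z' : EuclideanSpace ℝ (Fin d1)),
        ‖xstar y z - xstar y z'‖ ≤ p / (p - l) * ‖z - z'‖) ∧
    (∀ (y y' : EuclideanSpace ℝ (Fin d2)) (z : EuclideanSpace ℝ (Fin d1)),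
        ‖xstar y z - xstar y' z‖ ≤ (l + p) / (p - l) * ‖y - y'‖) ∧
    (∀ z z' : EuclideanSpace ℝ (Fin d1),
        ‖xstarz z - xstarz z'‖ ≤ p / (p - l) * ‖z - z'‖) := by
  have hpl' : 0 < p - l := sub_pos.2 hpl
  have hp : 0 ≤ p := hl.le.trans hpl.le
  refine ⟨fun y z z' => ?_, fun y y' z => ?_, fun z z' => ?_⟩ <;>
    rw [div_mul_eq_mul_div, le_div_iff₀' hpl']
  · simpa using hf.sub_mul_norm_sub_le_of_forall_fhat_le hl.le hp (hxstar y z) (hxstar y z')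
  · have := hf.sub_mul_norm_sub_le_of_forall_fhat_le hl.le hp (hxstar y z) (hxstar y' z)
    rw [sub_self, norm_zero, mul_zero, zero_add] at this
    nlinarith [norm_nonneg (y - y')]
  · have hbdd : ∀ x, BddAbove (f x '' Y) := fun x =>
      (hYcomp.image (hf.continuous_apply x)).bddAbove
    have hsup : ∀ x z, sSup ((fun y => fhat f p x y z) '' Y)
        = sSup (f x '' Y) + p / 2 * ‖x - z‖ ^ 2 := fun x z => csSup_image_fhat hYne (hbdd x) z
    refine mul_norm_sub_le_of_strongConvexOn_add_sq_norm_sub (G := fun x => sSup (f x '' Y)) hp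
      (fun z => ?_)
      (fun x => by simpa only [hsup] using hxstarz z x)
      (fun x => by simpa only [hsup] using hxstarz z' x)
    simpa only [hsup] using strongConvexOn_csSup_image convex_univ hYne
      (fun y _ => hf.strongConvexOn_fhat hl.le y z) fun x _ =>
        (hYcomp.image (f := fun y => fhat f p x y z)
          ((hf.continuous_apply x).add continuous_const)).bddAbove

/-- Lemma on Lipschitz continuity of the minimizers `x*`.
If `p > l`, then `x*(y, ·)` is `p/(p−l)`-Lipschitz, `x*(·, z)` is `(l+p)/(p−l)`-Lipschitz,
and the minimizer `x*(·)` of `x ↦ max_{y ∈ Y} f̂(x, y, z)` is `p/(p−l)`-Lipschitz. -/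
theorem statement0 {d1 d2 : ℕ} (l p : ℝ) (hl : 0 < l) (hpl : l < p)
    (f : EuclideanSpace ℝ (Fin d1) → EuclideanSpace ℝ (Fin d2) → ℝ)
    (hf : IsLSmooth l f)
    -- `x*(y, z)`: the (unique) minimizer of `x ↦ f̂(x, y, z)` over `ℝ^{d1}`
    (xstar : EuclideanSpace ℝ (Fin d2) → EuclideanSpace ℝ (Fin d1) → EuclideanSpace ℝ (Fin d1))
    (hxstar : ∀ y z x, fhat f p (xstar y z) y z ≤ fhat f p x y z)
    -- `Y` is nonempty, convex and compact
    (Y : Set (EuclideanSpace ℝ (Fin d2))) (hYne : Y.Nonempty) (hYconv : Convex ℝ Y)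
    (hYcomp : IsCompact Y)
    -- `x*(z)`: the (unique) minimizer of `x ↦ max_{y ∈ Y} f̂(x, y, z)` over `ℝ^{d1}`
    (xstarz : EuclideanSpace ℝ (Fin d1) → EuclideanSpace ℝ (Fin d1))
    (hxstarz : ∀ z x, sSup ((fun y => fhat f p (xstarz z) y z) '' Y)
        ≤ sSup ((fun y => fhat f p x y z) '' Y)) :
    (∀ (y : EuclideanSpace ℝ (Fin d2)) (z z' : EuclideanSpace ℝ (Fin d1)),
        ‖xstar y z - xstar y z'‖ ≤ p / (p - l) * ‖z - z'‖) ∧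
    (∀ (y y' : EuclideanSpace ℝ (Fin d2)) (z : EuclideanSpace ℝ (Fin d1)),
        ‖xstar y z - xstar y' z‖ ≤ (l + p) / (p - l) * ‖y - y'‖) ∧
    (∀ z z' : EuclideanSpace ℝ (Fin d1),
        ‖xstarz z - xstarz z'‖ ≤ p / (p - l) * ‖z - z'‖) :=
  statement0_general l p hl hpl f hf xstar hxstar Y hYne hYcomp xstarz hxstarz
end

section
/- Let p > 0 and 0 < η ≤ 1/(4(p+l)). Fix x, z, e ∈ ℝ^{d1} and y, y' ∈ ℝ^{d2}, and set x' := x − η(∇_x f(x,y) + p(x − z) − e). Then f̂(x,y,z) − f̂(x',y',z) ≥ (η/4)‖∇_x f̂(x,y,z)‖² − (η/2 + (p+l)η²)‖e‖² + ⟨∇_y f(x,y), y − y'⟩ − ((p+l)/2)‖y' − y‖², where ∇_x f̂(x,y,z) = ∇_x f(x,y) + p(x − z). -/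
open Set Metric
open scoped RealInnerProductSpace

/-!
Expanding the square, `f̂(·, ·, z)` differs from `f` by a quadratic in `x` whose Hessian is `p`,
so it inherits from the `l`-smoothness of `f` the descent lemma with constant `p + l`. Applying it
to the step `u = -η (∇ₓ f̂ - e)`, `v = y' - y` leaves `η ⟪G, G - e⟫ - (p + l) η² ‖G - e‖² / 2`
with `G = ∇ₓ f̂`; since `(p + l) η ≤ 1/4`, Young's inequality bounds this below by
`η ‖G‖² / 4 - (η / 2 + (p + l) η²) ‖e‖²`.
-/

theorem le_add_deriv_add_of_deriv_le {φ φ' : ℝ → ℝ} {K : ℝ} (hφ : ∀ t, HasDerivAt φ (φ' t) t)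
    (hφ' : ∀ t ∈ Ioo (0 : ℝ) 1, φ' t ≤ φ' 0 + K * t) :
    φ 1 ≤ φ 0 + φ' 0 + K / 2 := by
  have hB : ∀ t, HasDerivAt (fun s => φ 0 + s * φ' 0 + K / 2 * s ^ 2) (φ' 0 + K * t) t := by
    intro t
    refine ((((hasDerivAt_id' t).mul_const (φ' 0)).const_add (φ 0)).add
      ((hasDerivAt_pow 2 t).const_mul (K / 2))).congr_deriv (by ring)
  have h := image_le_of_deriv_right_le_deriv_boundary (a := 0) (b := 1)
    (fun t _ => (hφ t).continuousAt.continuousWithinAt) (fun t _ => (hφ t).hasDerivWithinAt)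
    (le_of_eq (by ring)) (fun t _ => (hB t).continuousAt.continuousWithinAt)
    (fun t _ => (hB t).hasDerivWithinAt) (B' := fun t => φ' 0 + K * t) ?_
    (right_mem_Icc.2 zero_le_one)
  · linarith
  · rintro t ⟨ht₀, ht₁⟩
    rcases ht₀.eq_or_lt with rfl | ht₀
    · simp
    · exact hφ' t ⟨ht₀, ht₁⟩

theorem inner_add_inner_le_of_norm_sq_add_norm_sq_le {E F : Type*} [NormedAddCommGroup E]
    [InnerProductSpace ℝ E] [NormedAddCommGroup F] [InnerProductSpace ℝ F]
    {a u : E} {b v : F} {c : ℝ} (hc : 0 < c)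
    (h : ‖a‖ ^ 2 + ‖b‖ ^ 2 ≤ c ^ 2 * (‖u‖ ^ 2 + ‖v‖ ^ 2)) :
    ⟪a, u⟫ + ⟪b, v⟫ ≤ c * (‖u‖ ^ 2 + ‖v‖ ^ 2) := by
  refine le_of_mul_le_mul_left ?_ (by positivity : 0 < 2 * c)
  nlinarith [real_inner_le_norm a u, real_inner_le_norm b v,
    sq_nonneg (‖a‖ - c * ‖u‖), sq_nonneg (‖b‖ - c * ‖v‖)]

theorem le_inner_sub_sub_norm_sq_sub {E : Type*} [NormedAddCommGroup E] [InnerProductSpace ℝ E]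
    {L η : ℝ} (hL : 0 ≤ L) (hη : 0 < η) (hLη : L * η ≤ 1 / 4) (G e : E) :
    η / 4 * ‖G‖ ^ 2 - (η / 2 + L * η ^ 2) * ‖e‖ ^ 2
      ≤ η * ⟪G, G - e⟫ - L / 2 * (η ^ 2 * ‖G - e‖ ^ 2) := by
  rw [inner_sub_right, real_inner_self_eq_norm_sq, norm_sub_sq_real]
  have young : 2 * ⟪G, e⟫ ≤ ‖G‖ ^ 2 + ‖e‖ ^ 2 := by
    nlinarith [norm_sub_sq_real G e, sq_nonneg ‖G - e‖]
  have hcoef : 0 ≤ η / 2 - L * η ^ 2 / 2 := by nlinarith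
  nlinarith [mul_nonneg hcoef (sub_nonneg.2 young), mul_nonneg hη.le (sq_nonneg ‖G‖),
    mul_nonneg (mul_nonneg hL (sq_nonneg η)) (sq_nonneg ‖e‖)]

section PartialGradients

variable {d1 d2 : ℕ} {f : EuclideanSpace ℝ (Fin d1) → EuclideanSpace ℝ (Fin d2) → ℝ}

theorem inner_gradx_eq_fderiv {a : EuclideanSpace ℝ (Fin d1)} {b : EuclideanSpace ℝ (Fin d2)}
    (hd : DifferentiableAt ℝ
      (fun w : EuclideanSpace ℝ (Fin d1) × EuclideanSpace ℝ (Fin d2) => f w.1 w.2) (a, b))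
    (u : EuclideanSpace ℝ (Fin d1)) :
    ⟪gradx f a b, u⟫ = fderiv ℝ
      (fun w : EuclideanSpace ℝ (Fin d1) × EuclideanSpace ℝ (Fin d2) => f w.1 w.2) (a, b) (u, 0) := by
  have h := hd.hasFDerivAt.comp a (hasFDerivAt_prodMk_left (𝕜 := ℝ) a b)
  rw [gradx, inner_gradient_left]
  exact congrArg (fun L => L u) h.fderiv

theorem inner_grady_eq_fderiv {a : EuclideanSpace ℝ (Fin d1)} {b : EuclideanSpace ℝ (Fin d2)}
    (hd : DifferentiableAt ℝ
      (fun w : EuclideanSpace ℝ (Fin d1) × EuclideanSpace ℝ (Fin d2) => f w.1 w.2) (a, b))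
    (v : EuclideanSpace ℝ (Fin d2)) :
    ⟪grady f a b, v⟫ = fderiv ℝ
      (fun w : EuclideanSpace ℝ (Fin d1) × EuclideanSpace ℝ (Fin d2) => f w.1 w.2) (a, b) (0, v) := by
  have h := hd.hasFDerivAt.comp b (hasFDerivAt_prodMk_right (𝕜 := ℝ) a b)
  rw [grady, inner_gradient_left]
  exact congrArg (fun L => L v) h.fderiv

theorem hasDerivAt_comp_line
    (hd : Differentiable ℝ
      (fun w : EuclideanSpace ℝ (Fin d1) × EuclideanSpace ℝ (Fin d2) => f w.1 w.2))
    (x u : EuclideanSpace ℝ (Fin d1)) (y v : EuclideanSpace ℝ (Fin d2)) (t : ℝ) :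
    HasDerivAt (fun s : ℝ => f (x + s • u) (y + s • v))
      (⟪gradx f (x + t • u) (y + t • v), u⟫ + ⟪grady f (x + t • u) (y + t • v), v⟫) t := by
  have hline : HasDerivAt (fun s : ℝ => (x + s • u, y + s • v)) (u, v) t := by
    have hx := ((hasDerivAt_id t).smul_const u).const_add x
    have hy := ((hasDerivAt_id t).smul_const v).const_add y
    simp only [id, one_smul] at hx hy
    exact hx.prodMk hy
  rw [inner_gradx_eq_fderiv (hd _), inner_grady_eq_fderiv (hd _), ← map_add, Prod.mk_add_mk,
    add_zero, zero_add]
  exact (hd _).hasFDerivAt.comp_hasDerivAt t hline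

theorem IsLSmooth.le_add_inner_add_inner {l : ℝ} (hl : 0 < l) (hf : IsLSmooth l f)
    (x u : EuclideanSpace ℝ (Fin d1)) (y v : EuclideanSpace ℝ (Fin d2)) :
    f (x + u) (y + v) ≤ f x y + (⟪gradx f x y, u⟫ + ⟪grady f x y, v⟫)
      + l / 2 * (‖u‖ ^ 2 + ‖v‖ ^ 2) := by
  have h := le_add_deriv_add_of_deriv_le (K := l * (‖u‖ ^ 2 + ‖v‖ ^ 2))
    (hasDerivAt_comp_line hf.1 x u y v) ?_
  · simp only [one_smul, zero_smul, add_zero] at h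
    linarith
  rintro t ⟨ht, -⟩
  have hlip := hf.2 (x + t • u) x (y + t • v) y
  simp only [add_sub_cancel_left, norm_smul, mul_pow, Real.norm_eq_abs, sq_abs] at hlip
  have hcs := inner_add_inner_le_of_norm_sq_add_norm_sq_le (u := u) (v := v) (mul_pos hl ht)
    (a := gradx f (x + t • u) (y + t • v) - gradx f x y)
    (b := grady f (x + t • u) (y + t • v) - grady f x y) (by linarith)
  simp only [zero_smul, add_zero, inner_sub_left] at hcs ⊢
  linarith

theorem fhat_le_add_inner_add_inner {l p : ℝ} (hl : 0 < l) (hp : 0 ≤ p) (hf : IsLSmooth l f)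
    (x u z : EuclideanSpace ℝ (Fin d1)) (y v : EuclideanSpace ℝ (Fin d2)) :
    fhat f p (x + u) (y + v) z ≤ fhat f p x y z
      + (⟪gradx f x y + p • (x - z), u⟫ + ⟪grady f x y, v⟫)
      + (p + l) / 2 * (‖u‖ ^ 2 + ‖v‖ ^ 2) := by
  have hquad : ‖x + u - z‖ ^ 2 = ‖x - z‖ ^ 2 + 2 * ⟪x - z, u⟫ + ‖u‖ ^ 2 := by
    rw [add_sub_right_comm, norm_add_sq_real]
  have hdesc := hf.le_add_inner_add_inner hl x u y v
  rw [fhat, fhat, hquad, inner_add_left, real_inner_smul_left]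
  nlinarith [mul_nonneg hp (sq_nonneg ‖v‖)]

end PartialGradients

/-- descent-type inequality for the inexact proximal gradient step in `x`. -/
theorem statement1 {d1 d2 : ℕ} (l p η : ℝ) (hl : 0 < l)
    (f : EuclideanSpace ℝ (Fin d1) → EuclideanSpace ℝ (Fin d2) → ℝ)
    (hf : IsLSmooth l f)
    (hp : 0 < p) (hη : 0 < η) (hη' : η ≤ 1 / (4 * (p + l)))
    (x z e : EuclideanSpace ℝ (Fin d1)) (y y' : EuclideanSpace ℝ (Fin d2)) :
    fhat f p x y z - fhat f p (x - η • (gradx f x y + p • (x - z) - e)) y' z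
      ≥ η / 4 * ‖gradx f x y + p • (x - z)‖ ^ 2
        - (η / 2 + (p + l) * η ^ 2) * ‖e‖ ^ 2
        + ⟪grady f x y, y - y'⟫
        - (p + l) / 2 * ‖y' - y‖ ^ 2 := by
  set G := gradx f x y + p • (x - z)
  have hpl : 0 < p + l := add_pos hp hl
  have hstep : (p + l) * η ≤ 1 / 4 := by
    rw [le_div_iff₀ (by positivity)] at hη'
    linarith
  have hdesc := fhat_le_add_inner_add_inner hl hp.le hf x (-(η • (G - e))) z y (y' - y)
  rw [← sub_eq_add_neg, add_sub_cancel, inner_neg_right, norm_neg, norm_smul, mul_pow,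
    Real.norm_eq_abs, sq_abs, real_inner_smul_right] at hdesc
  have hgain := le_inner_sub_sub_norm_sq_sub hpl.le hη hstep G e
  have hy : ⟪grady f x y, y - y'⟫ = -⟪grady f x y, y' - y⟫ := by
    rw [← inner_neg_right, neg_sub]
  rw [hy]
  linarith
end

section
/- Let p > l. For all y ∈ ℝ^{d2} and z, z' ∈ ℝ^{d1}: Ψ(y,z') − Ψ(y,z) ≥ (p/2)·⟨z' − z, z' + z − 2x*(y,z')⟩. -/
open Set Metric
open scoped RealInnerProductSpace

/-- `Ψ(y,z') − Ψ(y,z) ≥ (p/2)⟨z' − z, z' + z − 2x*(y,z')⟩`,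
where `Ψ(y,z) = min_x f̂(x,y,z) = f̂(x*(y,z),y,z)`. -/
theorem statement2 {d1 d2 : ℕ} (l p : ℝ) (hl : 0 < l) (hpl : l < p)
    (f : EuclideanSpace ℝ (Fin d1) → EuclideanSpace ℝ (Fin d2) → ℝ)
    (hf : IsLSmooth l f)
    -- `x*(y, z)`: the (unique) minimizer of `x ↦ f̂(x, y, z)` over `ℝ^{d1}`
    (xstar : EuclideanSpace ℝ (Fin d2) → EuclideanSpace ℝ (Fin d1) → EuclideanSpace ℝ (Fin d1))
    (hxstar : ∀ y z x, fhat f p (xstar y z) y z ≤ fhat f p x y z) :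
    ∀ (y : EuclideanSpace ℝ (Fin d2)) (z z' : EuclideanSpace ℝ (Fin d1)),
      fhat f p (xstar y z') y z' - fhat f p (xstar y z) y z
        ≥ p / 2 * ⟪z' - z, z' + z - (2 : ℝ) • xstar y z'⟫ := by
  intro y z z'
  set x := xstar y z' with hx
  have hmin : fhat f p (xstar y z) y z ≤ fhat f p x y z := hxstar y z x
  have hid : ‖x - z'‖ ^ 2 - ‖x - z‖ ^ 2 = ⟪z' - z, z' + z - (2 : ℝ) • x⟫ := by
    have h1 : ‖x - z'‖ ^ 2 = ⟪x - z', x - z'⟫ := (real_inner_self_eq_norm_sq _).symm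
    have h2 : ‖x - z‖ ^ 2 = ⟪x - z, x - z⟫ := (real_inner_self_eq_norm_sq _).symm
    rw [h1, h2]
    simp only [inner_sub_sub_self, inner_sub_left, inner_sub_right, inner_add_left,
      inner_add_right, inner_smul_right, real_inner_comm x z, real_inner_comm x z', real_inner_comm z z']
    ring
  simp only [fhat] at hmin ⊢
  have := hid
  nlinarith [hmin, hid]
end

section
/- Let p > l and let Y ⊆ ℝ^{d2} be nonempty. Fix z, z' ∈ ℝ^{d1}; suppose P(z) := sup_{y∈Y} Ψ(y,z) is finite and that P(z') = sup_{y∈Y} Ψ(y,z') is attained at some ŷ*(z') ∈ Y. Then P(z') − P(z) ≤ (p/2)·⟨z' − z, z' + z − 2x*(ŷ*(z'),z)⟩. -/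
open Set Metric
open scoped RealInnerProductSpace

/-- `P(z') − P(z) ≤ (p/2)⟨z' − z, z' + z − 2x*(ŷ*(z'),z)⟩` where
`P(z) = sup_{y∈Y} Ψ(y,z)` is finite and `P(z')` is attained at `ŷ*(z') ∈ Y`.
Here `Ψ(y,z) = f̂(x*(y,z),y,z)`. -/
theorem statement3 {d1 d2 : ℕ} (l p : ℝ) (hl : 0 < l) (hpl : l < p)
    (f : EuclideanSpace ℝ (Fin d1) → EuclideanSpace ℝ (Fin d2) → ℝ)
    (hf : IsLSmooth l f)
    (xstar : EuclideanSpace ℝ (Fin d2) → EuclideanSpace ℝ (Fin d1) → EuclideanSpace ℝ (Fin d1))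
    (hxstar : ∀ y z x, fhat f p (xstar y z) y z ≤ fhat f p x y z)
    (Y : Set (EuclideanSpace ℝ (Fin d2))) (hYne : Y.Nonempty)
    (z z' : EuclideanSpace ℝ (Fin d1))
    -- `P(z) = sup_{y ∈ Y} Ψ(y, z)` is finite
    (Pz : ℝ) (hPz : IsLUB ((fun y => fhat f p (xstar y z) y z) '' Y) Pz)
    -- `P(z')` is attained at `ŷ*(z') ∈ Y`
    (ystar : EuclideanSpace ℝ (Fin d2)) (hystarY : ystar ∈ Y)
    (hystar : ∀ y ∈ Y, fhat f p (xstar y z') y z' ≤ fhat f p (xstar ystar z') ystar z') :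
    fhat f p (xstar ystar z') ystar z' - Pz
      ≤ p / 2 * ⟪z' - z, z' + z - (2 : ℝ) • xstar ystar z⟫ := by
  set x := xstar ystar z with hx
  have h1 : fhat f p (xstar ystar z') ystar z' ≤ fhat f p x ystar z' :=
    hxstar ystar z' x
  have h2 : fhat f p x ystar z ≤ Pz := hPz.1 ⟨ystar, hystarY, rfl⟩
  have key : ‖x - z'‖ ^ 2 - ‖x - z‖ ^ 2 = ⟪z' - z, z' + z - (2 : ℝ) • x⟫ := by
    rw [← real_inner_self_eq_norm_sq, ← real_inner_self_eq_norm_sq]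
    simp only [inner_sub_left, inner_sub_right, inner_add_left, inner_add_right,
      inner_smul_right, real_inner_comm z x, real_inner_comm z' x, real_inner_comm z' z]
    ring
  have hple : p / 2 ≥ 0 := by linarith
  have : fhat f p x ystar z' - fhat f p x ystar z
      = p / 2 * ⟪z' - z, z' + z - (2 : ℝ) • x⟫ := by
    rw [← key]; simp [fhat]; ring
  linarith
end

section
/- Let p > l, set γ₁ := p/(p−l), and let β > 0. Let Y ⊆ ℝ^{d2} be nonempty, fix z, z' ∈ ℝ^{d1}, suppose P(z) := sup_{y∈Y} Ψ(y,z) is finite and P(z') is attained at some ŷ*(z') ∈ Y. Then for every y' ∈ Y: 2(Ψ(y',z') − Ψ(y',z)) − 2(P(z') − P(z)) ≥ −(2pγ₁ + p/(6β))‖z' − z‖² − 6pβ‖x*(ŷ*(z'),z') − x*(y',z')‖². -/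
open Set Metric
open scoped RealInnerProductSpace

/-!
Write `x₁ = x*(y', z')`, `x₂ = x*(ŷ, z)`, `x₃ = x*(ŷ, z')` with `ŷ = ŷ*(z')`. Testing the minimisations
defining `Ψ(y', z)` and `Ψ(ŷ, z')` at `x₁` and `x₂`, and using `Ψ(ŷ, z) ≤ P(z)`, the left-hand side is
at least `2p⟪x₁ - x₂, z - z'⟫`, because `f̂(x, y, z') - f̂(x, y, z)` is affine in `x`. Split
`x₁ - x₂ = (x₁ - x₃) + (x₃ - x₂)`: the second piece is at most `γ₁‖z' - z‖` since `x*(ŷ, ·)` solves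
`∇ₓf(x, ŷ) + p(x - z) = 0` with `∇ₓf` `l`-Lipschitz, and the first is handled by Cauchy–Schwarz and
Young's inequality with weight `6β`.
-/

section Proximal

variable {E : Type*}

theorem gradient_add_smul_sub_eq_zero_of_isLocalMin [NormedAddCommGroup E]
    [InnerProductSpace ℝ E] [CompleteSpace E] {g : E → ℝ} {p : ℝ} {z x₀ : E}
    (hg : DifferentiableAt ℝ g x₀)
    (hmin : IsLocalMin (fun x => g x + p / 2 * ‖x - z‖ ^ 2) x₀) :
    gradient g x₀ + p • (x₀ - z) = 0 := by
  set w := gradient g x₀ + p • (x₀ - z)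
  have hderiv := hg.hasFDerivAt.add (((hasFDerivAt_id x₀).sub_const z).norm_sq.const_mul (p / 2))
  have hzero : fderiv ℝ g x₀ w + p / 2 * (2 * ⟪x₀ - z, w⟫) = 0 := by
    simpa only [add_apply, smul_apply, ContinuousLinearMap.comp_apply, innerSL_apply_apply, id_eq,
      ContinuousLinearMap.id_apply, nsmul_eq_mul, Nat.cast_ofNat, smul_eq_mul, zero_apply]
      using congrArg (· w) (hmin.hasFDerivAt_eq_zero hderiv)
  refine inner_self_eq_zero (𝕜 := ℝ) |>.mp ?_
  calc ⟪w, w⟫ = fderiv ℝ g x₀ w + p / 2 * (2 * ⟪x₀ - z, w⟫) := by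
        rw [← inner_gradient_left]; nth_rw 1 [inner_add_left, real_inner_smul_left]; ring
    _ = 0 := hzero

theorem norm_sub_le_of_add_smul_sub_eq_zero [SeminormedAddCommGroup E] [NormedSpace ℝ E]
    {G : E → E} {l p : ℝ} (hl : 0 ≤ l) (hpl : l < p) (hG : ∀ u v, ‖G u - G v‖ ≤ l * ‖u - v‖)
    {z z' u v : E} (hu : G u + p • (u - z) = 0) (hv : G v + p • (v - z') = 0) :
    ‖u - v‖ ≤ p / (p - l) * ‖z - z'‖ := by
  have hp : 0 ≤ p := hl.trans hpl.le
  have hsmul : p • (u - v) = p • (z - z') - (G u - G v) := by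
    rw [eq_neg_of_add_eq_zero_left hu, eq_neg_of_add_eq_zero_left hv]; module
  have hnorm : p * ‖u - v‖ ≤ p * ‖z - z'‖ + l * ‖u - v‖ :=
    calc p * ‖u - v‖ = ‖p • (z - z') - (G u - G v)‖ := by
          rw [← hsmul, norm_smul, Real.norm_of_nonneg hp]
      _ ≤ ‖p • (z - z')‖ + ‖G u - G v‖ := norm_sub_le _ _
      _ ≤ p * ‖z - z'‖ + l * ‖u - v‖ := by
          rw [norm_smul, Real.norm_of_nonneg hp]; gcongr; exact hG u v
  rw [div_mul_eq_mul_div, le_div_iff₀ (sub_pos.2 hpl)]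
  linarith

theorem neg_le_two_mul_inner_sub [NormedAddCommGroup E] [InnerProductSpace ℝ E]
    {a b c z z' : E} {p β γ : ℝ} (hp : 0 ≤ p) (hβ : 0 < β)
    (hcb : ‖c - b‖ ≤ γ * ‖z' - z‖) :
    -(2 * p * γ + p / (6 * β)) * ‖z' - z‖ ^ 2 - 6 * p * β * ‖c - a‖ ^ 2
      ≤ 2 * p * ⟪a - b, z - z'⟫ := by
  have hca : -(‖c - a‖ * ‖z' - z‖) ≤ ⟪a - c, z - z'⟫ := by
    rw [norm_sub_rev c a, norm_sub_rev z' z]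
    exact neg_le_of_abs_le (abs_real_inner_le_norm _ _)
  have hcb' : -(γ * ‖z' - z‖ ^ 2) ≤ ⟪c - b, z - z'⟫ :=
    calc -(γ * ‖z' - z‖ ^ 2) ≤ -(‖c - b‖ * ‖z - z'‖) := by
          rw [norm_sub_rev z z', sq, ← mul_assoc]; gcongr
      _ ≤ ⟪c - b, z - z'⟫ := neg_le_of_abs_le (abs_real_inner_le_norm _ _)
  have hyoung : 0 ≤ 6 * β * ‖c - a‖ ^ 2 + ‖z' - z‖ ^ 2 / (6 * β) - 2 * (‖c - a‖ * ‖z' - z‖) := by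
    have hsq : 6 * β * ‖c - a‖ ^ 2 + ‖z' - z‖ ^ 2 / (6 * β) - 2 * (‖c - a‖ * ‖z' - z‖)
        = (6 * β * ‖c - a‖ - ‖z' - z‖) ^ 2 / (6 * β) := by
      field_simp; ring
    rw [hsq]; positivity
  calc _ = 2 * p * -(‖c - a‖ * ‖z' - z‖) + 2 * p * -(γ * ‖z' - z‖ ^ 2)
        - p * (6 * β * ‖c - a‖ ^ 2 + ‖z' - z‖ ^ 2 / (6 * β) - 2 * (‖c - a‖ * ‖z' - z‖)) := by
        ring
    _ ≤ 2 * p * ⟪a - c, z - z'⟫ + 2 * p * ⟪c - b, z - z'⟫ - p * 0 := by gcongr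
    _ = 2 * p * ⟪a - b, z - z'⟫ := by rw [← sub_add_sub_cancel a c b, inner_add_left]; ring

end Proximal

theorem IsLSmooth.norm_gradx_sub_le_s4 {d1 d2 : ℕ} {l : ℝ}
    {f : EuclideanSpace ℝ (Fin d1) → EuclideanSpace ℝ (Fin d2) → ℝ} (hf : IsLSmooth l f)
    (hl : 0 ≤ l) (x₁ x₂ : EuclideanSpace ℝ (Fin d1)) (y : EuclideanSpace ℝ (Fin d2)) :
    ‖gradx f x₁ y - gradx f x₂ y‖ ≤ l * ‖x₁ - x₂‖ := by
  refine le_of_sq_le_sq ?_ (by positivity)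
  have := hf.2 x₁ x₂ y y
  simp only [sub_self, norm_zero] at this
  nlinarith [sq_nonneg ‖grady f x₁ y - grady f x₂ y‖]

theorem IsLSmooth.differentiable_left {d1 d2 : ℕ} {l : ℝ}
    {f : EuclideanSpace ℝ (Fin d1) → EuclideanSpace ℝ (Fin d2) → ℝ} (hf : IsLSmooth l f)
    (y : EuclideanSpace ℝ (Fin d2)) : Differentiable ℝ (fun x => f x y) :=
  hf.1.comp (differentiable_id.prodMk (differentiable_const y))

theorem fhat_sub_fhat {d1 d2 : ℕ}
    (f : EuclideanSpace ℝ (Fin d1) → EuclideanSpace ℝ (Fin d2) → ℝ) (p : ℝ)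
    (x : EuclideanSpace ℝ (Fin d1)) (y : EuclideanSpace ℝ (Fin d2))
    (z z' : EuclideanSpace ℝ (Fin d1)) :
    fhat f p x y z' - fhat f p x y z = p * ⟪x, z - z'⟫ + p / 2 * (‖z'‖ ^ 2 - ‖z‖ ^ 2) := by
  simp only [fhat, norm_sub_sq_real, inner_sub_right]
  ring

theorem statement4_general {d1 d2 : ℕ} (l p β : ℝ) (hl : 0 < l) (hpl : l < p) (hβ : 0 < β)
    (f : EuclideanSpace ℝ (Fin d1) → EuclideanSpace ℝ (Fin d2) → ℝ)
    (hf : IsLSmooth l f)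
    (xstar : EuclideanSpace ℝ (Fin d2) → EuclideanSpace ℝ (Fin d1) → EuclideanSpace ℝ (Fin d1))
    (hxstar : ∀ y z x, fhat f p (xstar y z) y z ≤ fhat f p x y z)
    (Y : Set (EuclideanSpace ℝ (Fin d2)))
    (z z' : EuclideanSpace ℝ (Fin d1))
    -- `P(z) = sup_{y ∈ Y} Ψ(y, z)` is finite
    (Pz : ℝ) (hPz : IsLUB ((fun y => fhat f p (xstar y z) y z) '' Y) Pz)
    -- `P(z')` is attained at `ŷ*(z') ∈ Y`
    (ystar : EuclideanSpace ℝ (Fin d2)) (hystarY : ystar ∈ Y)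
    (y' : EuclideanSpace ℝ (Fin d2)) :
    2 * (fhat f p (xstar y' z') y' z' - fhat f p (xstar y' z) y' z)
      - 2 * (fhat f p (xstar ystar z') ystar z' - Pz)
      ≥ -(2 * p * (p / (p - l)) + p / (6 * β)) * ‖z' - z‖ ^ 2
        - 6 * p * β * ‖xstar ystar z' - xstar y' z'‖ ^ 2 := by
  have hp : 0 < p := hl.trans hpl
  have hstationary : ∀ y z, gradx f (xstar y z) y + p • (xstar y z - z) = 0 := fun y z =>
    gradient_add_smul_sub_eq_zero_of_isLocalMin (hf.differentiable_left y _)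
      (Filter.Eventually.of_forall (hxstar y z))
  have hlip : ‖xstar ystar z' - xstar ystar z‖ ≤ p / (p - l) * ‖z' - z‖ :=
    norm_sub_le_of_add_smul_sub_eq_zero hl.le hpl (hf.norm_gradx_sub_le_s4 hl.le · · ystar)
      (hstationary ystar z') (hstationary ystar z)
  have hPz_ge : fhat f p (xstar ystar z) ystar z ≤ Pz := hPz.1 ⟨ystar, hystarY, rfl⟩
  have hΨ_le := hxstar y' z (xstar y' z')
  have hΨ'_le := hxstar ystar z' (xstar ystar z)
  have hdiff₁ := fhat_sub_fhat f p (xstar y' z') y' z z'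
  have hdiff₂ := fhat_sub_fhat f p (xstar ystar z) ystar z z'
  have hbound := neg_le_two_mul_inner_sub (a := xstar y' z') hp.le hβ hlip
  rw [inner_sub_left] at hbound
  linarith

/-- for every `y' ∈ Y`,
`2(Ψ(y',z') − Ψ(y',z)) − 2(P(z') − P(z))
  ≥ −(2pγ₁ + p/(6β))‖z' − z‖² − 6pβ‖x*(ŷ*(z'),z') − x*(y',z')‖²`,
with `γ₁ = p/(p−l)`, `Ψ(y,z) = f̂(x*(y,z),y,z)`, `P(z) = sup_{y∈Y} Ψ(y,z)` finite and
`P(z')` attained at `ŷ*(z') ∈ Y`. -/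
theorem statement4 {d1 d2 : ℕ} (l p β : ℝ) (hl : 0 < l) (hpl : l < p) (hβ : 0 < β)
    (f : EuclideanSpace ℝ (Fin d1) → EuclideanSpace ℝ (Fin d2) → ℝ)
    (hf : IsLSmooth l f)
    (xstar : EuclideanSpace ℝ (Fin d2) → EuclideanSpace ℝ (Fin d1) → EuclideanSpace ℝ (Fin d1))
    (hxstar : ∀ y z x, fhat f p (xstar y z) y z ≤ fhat f p x y z)
    (Y : Set (EuclideanSpace ℝ (Fin d2))) (hYne : Y.Nonempty)
    (z z' : EuclideanSpace ℝ (Fin d1))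
    -- `P(z) = sup_{y ∈ Y} Ψ(y, z)` is finite
    (Pz : ℝ) (hPz : IsLUB ((fun y => fhat f p (xstar y z) y z) '' Y) Pz)
    -- `P(z')` is attained at `ŷ*(z') ∈ Y`
    (ystar : EuclideanSpace ℝ (Fin d2)) (hystarY : ystar ∈ Y)
    (hystar : ∀ y ∈ Y, fhat f p (xstar y z') y z' ≤ fhat f p (xstar ystar z') ystar z')
    (y' : EuclideanSpace ℝ (Fin d2)) (hy' : y' ∈ Y) :
    2 * (fhat f p (xstar y' z') y' z' - fhat f p (xstar y' z) y' z)
      - 2 * (fhat f p (xstar ystar z') ystar z' - Pz)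
      ≥ -(2 * p * (p / (p - l)) + p / (6 * β)) * ‖z' - z‖ ^ 2
        - 6 * p * β * ‖xstar ystar z' - xstar y' z'‖ ^ 2 :=
  statement4_general l p β hl hpl hβ f hf xstar hxstar Y z z' Pz hPz ystar hystarY y'
end

section
/- Let p = 2l, 0 < η_x ≤ 1/(1000l), and η_y = η_x/256. Fix x, z ∈ ℝ^{d1} and y ∈ ℝ^{d2}, and set x' := x − η_x∇_x f̂(x,y,z) and y' := y + η_y∇_y f(x,y). Then f̂(x,y,z) − f̂(x',y',z) + 2(Ψ(y',z) − Ψ(y,z)) ≥ (η_x/8)‖∇_x f̂(x,y,z)‖² + (η_y/8)‖∇_y f(x,y)‖². -/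
open Set Metric
open scoped RealInnerProductSpace

/-!
The descent lemma for `f` bounds `f̂(x', y', z)` from above. For the envelope, minimality of
`x*(y, z)` gives `Ψ(y', z) − Ψ(y, z) ≥ f(x*(y', z), y') − f(x*(y', z), y)`, which the descent
lemma bounds below by `⟪∇_y f(x*(y', z), y), y' − y⟫ − (l/2)‖y' − y‖²`. Since `∇_x f̂(·, y, z)` is
`l`-strongly monotone and `l`-Lipschitz in `y`, the map `x*(·, z)` is `1`-Lipschitz and
`l‖x − x*(y, z)‖ ≤ ‖∇_x f̂(x, y, z)‖`; hence `∇_y f(x*(y', z), y)` is within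
`l η_y ‖∇_y f(x, y)‖ + ‖∇_x f̂(x, y, z)‖` of `∇_y f(x, y)`. The cross term this produces is
absorbed thanks to `η_y = η_x / 256`, and the second-order terms thanks to `l η_x ≤ 1/1000`.
-/

local notation "𝔼" n:max => EuclideanSpace ℝ (Fin n)

theorem abs_sub_sub_deriv_le_of_abs_deriv_sub_le {φ φ' : ℝ → ℝ} {C : ℝ}
    (hφ : ∀ t, HasDerivAt φ (φ' t) t) (hφ' : ∀ t ∈ Ico (0 : ℝ) 1, |φ' t - φ' 0| ≤ C * t) :
    |φ 1 - φ 0 - φ' 0| ≤ C / 2 := by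
  have key := image_norm_le_of_norm_deriv_right_le_deriv_boundary
    (f := fun t => φ t - φ 0 - t * φ' 0) (f' := fun t => φ' t - φ' 0)
    (B := fun t => C / 2 * t ^ 2) (B' := fun t => C * t) (a := 0) (b := 1)
    (fun t _ => (((hφ t).continuousAt.sub continuousAt_const).sub
      (continuousAt_id.mul continuousAt_const)).continuousWithinAt)
    (fun t _ => (((hφ t).sub_const _).sub (by simpa using (hasDerivAt_id t).mul_const (φ' 0)))
      |>.hasDerivWithinAt)
    (by simp)
    (fun t => ((hasDerivAt_pow 2 t).const_mul (C / 2)).congr_deriv (by ring))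
    hφ'
    (right_mem_Icc.2 zero_le_one)
  simpa using key

theorem abs_inner_add_inner_le {E F : Type*} [NormedAddCommGroup E] [InnerProductSpace ℝ E]
    [NormedAddCommGroup F] [InnerProductSpace ℝ F] {g₁ u : E} {g₂ v : F} {K : ℝ} (hK : 0 ≤ K)
    (hg : ‖g₁‖ ^ 2 + ‖g₂‖ ^ 2 ≤ K ^ 2 * (‖u‖ ^ 2 + ‖v‖ ^ 2)) :
    |⟪g₁, u⟫ + ⟪g₂, v⟫| ≤ K * (‖u‖ ^ 2 + ‖v‖ ^ 2) := by
  have hcs : ‖g₁‖ * ‖u‖ + ‖g₂‖ * ‖v‖ ≤ K * (‖u‖ ^ 2 + ‖v‖ ^ 2) := by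
    refine (sq_le_sq₀ (by positivity) (by positivity)).1 ?_
    nlinarith [sq_nonneg (‖g₁‖ * ‖v‖ - ‖g₂‖ * ‖u‖), sq_nonneg (‖u‖ ^ 2 + ‖v‖ ^ 2)]
  calc |⟪g₁, u⟫ + ⟪g₂, v⟫| ≤ |⟪g₁, u⟫| + |⟪g₂, v⟫| := abs_add_le _ _
    _ ≤ ‖g₁‖ * ‖u‖ + ‖g₂‖ * ‖v‖ :=
      add_le_add (abs_real_inner_le_norm _ _) (abs_real_inner_le_norm _ _)
    _ ≤ _ := hcs

theorem mul_norm_le_norm_of_mul_sq_le_inner {E : Type*} [NormedAddCommGroup E]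
    [InnerProductSpace ℝ E] {g w : E} {k : ℝ} (h : k * ‖w‖ ^ 2 ≤ ⟪g, w⟫) : k * ‖w‖ ≤ ‖g‖ := by
  rcases (norm_nonneg w).eq_or_lt with hw | hw
  · simp [← hw]
  · refine le_of_mul_le_mul_right ?_ hw
    nlinarith [real_inner_le_norm g w]

section Differentiable

variable {d1 d2 : ℕ} {f : 𝔼 d1 → 𝔼 d2 → ℝ}

theorem hasGradientAt_gradx (hf : Differentiable ℝ (fun w : 𝔼 d1 × 𝔼 d2 => f w.1 w.2))
    (a : 𝔼 d1) (b : 𝔼 d2) :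
    HasGradientAt (fun x => f x b) (gradx f a b) a :=
  have h : DifferentiableAt ℝ ((fun w : 𝔼 d1 × 𝔼 d2 => f w.1 w.2) ∘ fun x => (x, b)) a :=
    (hf (a, b)).comp a (by fun_prop)
  h.hasGradientAt

theorem hasGradientAt_grady (hf : Differentiable ℝ (fun w : 𝔼 d1 × 𝔼 d2 => f w.1 w.2))
    (a : 𝔼 d1) (b : 𝔼 d2) :
    HasGradientAt (fun y => f a y) (grady f a b) b :=
  have h : DifferentiableAt ℝ ((fun w : 𝔼 d1 × 𝔼 d2 => f w.1 w.2) ∘ fun y => (a, y)) b :=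
    (hf (a, b)).comp b (by fun_prop)
  h.hasGradientAt

theorem fderiv_uncurry_apply (hf : Differentiable ℝ (fun w : 𝔼 d1 × 𝔼 d2 => f w.1 w.2))
    (a u : 𝔼 d1) (b v : 𝔼 d2) :
    fderiv ℝ (fun w : 𝔼 d1 × 𝔼 d2 => f w.1 w.2) (a, b) (u, v)
      = ⟪gradx f a b, u⟫ + ⟪grady f a b, v⟫ := by
  set L := fderiv ℝ (fun w : 𝔼 d1 × 𝔼 d2 => f w.1 w.2) (a, b)
  have hL : HasFDerivAt (fun w : 𝔼 d1 × 𝔼 d2 => f w.1 w.2) L (a, b) := (hf (a, b)).hasFDerivAt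
  have hLx : HasFDerivAt ((fun w : 𝔼 d1 × 𝔼 d2 => f w.1 w.2) ∘ fun x => (x, b)) _ a :=
    hL.comp a (hasFDerivAt_prodMk_left a b)
  have hLy : HasFDerivAt ((fun w : 𝔼 d1 × 𝔼 d2 => f w.1 w.2) ∘ fun y => (a, y)) _ b :=
    hL.comp b (hasFDerivAt_prodMk_right a b)
  have hx := (hasGradientAt_gradx hf a b).hasFDerivAt.unique hLx
  have hy := (hasGradientAt_grady hf a b).hasFDerivAt.unique hLy
  have hx' := congrArg (· u) hx
  have hy' := congrArg (· v) hy
  simp only [InnerProductSpace.toDual_apply_apply, ContinuousLinearMap.comp_apply,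
    ContinuousLinearMap.inl_apply, ContinuousLinearMap.inr_apply] at hx' hy'
  rw [hx', hy', ← map_add]
  simp

theorem hasDerivAt_along_line (hf : Differentiable ℝ (fun w : 𝔼 d1 × 𝔼 d2 => f w.1 w.2))
    (a u : 𝔼 d1) (b v : 𝔼 d2) (t : ℝ) :
    HasDerivAt (fun s : ℝ => f (a + s • u) (b + s • v))
      (⟪gradx f (a + t • u) (b + t • v), u⟫ + ⟪grady f (a + t • u) (b + t • v), v⟫) t := by
  have hline : HasDerivAt (fun s : ℝ => ((a + s • u, b + s • v) : 𝔼 d1 × 𝔼 d2)) (u, v) t :=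
    (by simpa using ((hasDerivAt_id t).smul_const u).const_add a : HasDerivAt _ u t).prodMk
      (by simpa using ((hasDerivAt_id t).smul_const v).const_add b)
  have h := (hf (a + t • u, b + t • v)).hasFDerivAt.comp_hasDerivAt t hline
  rwa [fderiv_uncurry_apply hf] at h

end Differentiable

namespace IsLSmooth

variable {d1 d2 : ℕ} {f : 𝔼 d1 → 𝔼 d2 → ℝ} {l : ℝ}

theorem norm_gradx_sub_gradx_le_left (hf : IsLSmooth l f) (hl : 0 ≤ l) (a a' : 𝔼 d1) (b : 𝔼 d2) :
    ‖gradx f a b - gradx f a' b‖ ≤ l * ‖a - a'‖ := by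
  have h := hf.2 a a' b b
  rw [sub_self, norm_zero] at h
  refine (sq_le_sq₀ (norm_nonneg _) (by positivity)).1 ?_
  nlinarith [sq_nonneg ‖grady f a b - grady f a' b‖]

theorem norm_gradx_sub_gradx_le_right (hf : IsLSmooth l f) (hl : 0 ≤ l) (a : 𝔼 d1) (b b' : 𝔼 d2) :
    ‖gradx f a b - gradx f a b'‖ ≤ l * ‖b - b'‖ := by
  have h := hf.2 a a b b'
  rw [sub_self, norm_zero] at h
  refine (sq_le_sq₀ (norm_nonneg _) (by positivity)).1 ?_
  nlinarith [sq_nonneg ‖grady f a b - grady f a b'‖]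

theorem norm_grady_sub_grady_le_left (hf : IsLSmooth l f) (hl : 0 ≤ l) (a a' : 𝔼 d1) (b : 𝔼 d2) :
    ‖grady f a b - grady f a' b‖ ≤ l * ‖a - a'‖ := by
  have h := hf.2 a a' b b
  rw [sub_self, norm_zero] at h
  refine (sq_le_sq₀ (norm_nonneg _) (by positivity)).1 ?_
  nlinarith [sq_nonneg ‖gradx f a b - gradx f a' b‖]

theorem abs_sub_sub_inner_le (hf : IsLSmooth l f) (hl : 0 ≤ l) (a u : 𝔼 d1) (b v : 𝔼 d2) :
    |f (a + u) (b + v) - f a b - (⟪gradx f a b, u⟫ + ⟪grady f a b, v⟫)|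
      ≤ l / 2 * (‖u‖ ^ 2 + ‖v‖ ^ 2) := by
  have hderiv : ∀ t ∈ Ico (0 : ℝ) 1,
      |(⟪gradx f (a + t • u) (b + t • v), u⟫ + ⟪grady f (a + t • u) (b + t • v), v⟫)
        - (⟪gradx f (a + (0 : ℝ) • u) (b + (0 : ℝ) • v), u⟫
          + ⟪grady f (a + (0 : ℝ) • u) (b + (0 : ℝ) • v), v⟫)|
        ≤ l * (‖u‖ ^ 2 + ‖v‖ ^ 2) * t := by
    rintro t ⟨ht, -⟩
    have hlip := hf.2 (a + t • u) a (b + t • v) b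
    simp only [add_sub_cancel_left, norm_smul, mul_pow, Real.norm_eq_abs, sq_abs] at hlip
    simp only [zero_smul, add_zero]
    rw [add_sub_add_comm, ← inner_sub_left, ← inner_sub_left, mul_comm _ t, ← mul_assoc]
    exact abs_inner_add_inner_le (by positivity) (by linarith)
  have h := abs_sub_sub_deriv_le_of_abs_deriv_sub_le (hasDerivAt_along_line hf.1 a u b v) hderiv
  simp only [one_smul, zero_smul, add_zero] at h
  linarith

theorem fhat_add_le (hf : IsLSmooth l f) (hl : 0 ≤ l) (p : ℝ) (x u z : 𝔼 d1) (y v : 𝔼 d2) :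
    fhat f p (x + u) (y + v) z ≤ fhat f p x y z + ⟪gradx f x y + p • (x - z), u⟫
      + ⟪grady f x y, v⟫ + l / 2 * (‖u‖ ^ 2 + ‖v‖ ^ 2) + p / 2 * ‖u‖ ^ 2 := by
  have hf_le := (abs_le.1 (hf.abs_sub_sub_inner_le hl x u y v)).2
  have hsq : ‖x + u - z‖ ^ 2 = ‖x - z‖ ^ 2 + 2 * ⟪x - z, u⟫ + ‖u‖ ^ 2 := by
    rw [add_sub_right_comm, norm_add_sq_real]
  have hinner : ⟪gradx f x y + p • (x - z), u⟫ = ⟪gradx f x y, u⟫ + p * ⟪x - z, u⟫ := by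
    rw [inner_add_left, real_inner_smul_left]
  rw [fhat, fhat, hsq, hinner]
  linarith

theorem gradx_add_smul_eq_zero_of_forall_le (hf : IsLSmooth l f) (hl : 0 ≤ l) {p : ℝ}
    (hlp : 0 < l + p) {a z : 𝔼 d1} {b : 𝔼 d2} (hmin : ∀ x, fhat f p a b z ≤ fhat f p x b z) :
    gradx f a b + p • (a - z) = 0 := by
  set g := gradx f a b + p • (a - z) with hg_def
  -- a gradient step of length `1 / (l + p)` from `a` decreases `f̂` by `‖g‖² / (2 (l + p))`
  have hstep := hf.fhat_add_le hl p a (-(l + p)⁻¹ • g) z b 0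
  rw [add_zero, ← hg_def] at hstep
  replace hstep := (hmin _).trans hstep
  simp only [inner_zero_right, norm_zero, norm_smul, inner_smul_right, real_inner_self_eq_norm_sq,
    norm_neg, norm_inv, Real.norm_eq_abs, abs_of_pos hlp] at hstep
  have hg : ‖g‖ ^ 2 ≤ 0 := by
    field_simp at hstep
    nlinarith
  simpa using hg

theorem mul_norm_sq_le_inner_gradx_fhat_sub (hf : IsLSmooth l f) (hl : 0 ≤ l) (p : ℝ)
    (a a' z : 𝔼 d1) (b : 𝔼 d2) :
    (p - l) * ‖a - a'‖ ^ 2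
      ≤ ⟪(gradx f a b + p • (a - z)) - (gradx f a' b + p • (a' - z)), a - a'⟫ := by
  have hlip := (abs_le.1 <| (abs_real_inner_le_norm (gradx f a b - gradx f a' b) (a - a')).trans
    (mul_le_mul_of_nonneg_right (hf.norm_gradx_sub_gradx_le_left hl a a' b) (norm_nonneg _))).1
  have hsplit : (gradx f a b + p • (a - z)) - (gradx f a' b + p • (a' - z))
      = (gradx f a b - gradx f a' b) + p • (a - a') := by
    simp only [smul_sub]; abel
  rw [hsplit, inner_add_left, real_inner_smul_left, real_inner_self_eq_norm_sq]
  nlinarith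

theorem mul_norm_sub_le_norm_gradx_fhat (hf : IsLSmooth l f) (hl : 0 ≤ l) {p : ℝ} {a z : 𝔼 d1}
    {b : 𝔼 d2} (ha : gradx f a b + p • (a - z) = 0) (x : 𝔼 d1) :
    (p - l) * ‖x - a‖ ≤ ‖gradx f x b + p • (x - z)‖ :=
  mul_norm_le_norm_of_mul_sq_le_inner <| by
    simpa only [ha, sub_zero] using hf.mul_norm_sq_le_inner_gradx_fhat_sub hl p x a z b

theorem mul_norm_sub_le_mul_norm_sub (hf : IsLSmooth l f) (hl : 0 ≤ l) {p : ℝ} {a a' z : 𝔼 d1}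
    {b b' : 𝔼 d2} (ha : gradx f a b + p • (a - z) = 0) (ha' : gradx f a' b' + p • (a' - z) = 0) :
    (p - l) * ‖a' - a‖ ≤ l * ‖b' - b‖ := by
  have h := hf.mul_norm_sq_le_inner_gradx_fhat_sub hl p a' a z b
  rw [ha, sub_zero, ← sub_zero (gradx f a' b + _), ← ha', add_sub_add_right_eq_sub] at h
  rw [norm_sub_rev b']
  exact (mul_norm_le_norm_of_mul_sq_le_inner h).trans (hf.norm_gradx_sub_gradx_le_right hl a' b b')

theorem mul_norm_sub_le_add_norm_gradx_fhat (hf : IsLSmooth l f) (hl : 0 ≤ l) {p : ℝ}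
    (hpl : l ≤ p) {a a' z : 𝔼 d1} {b b' : 𝔼 d2} (ha : gradx f a b + p • (a - z) = 0)
    (ha' : gradx f a' b' + p • (a' - z) = 0) (x : 𝔼 d1) :
    (p - l) * ‖a' - x‖ ≤ l * ‖b' - b‖ + ‖gradx f x b + p • (x - z)‖ :=
  calc (p - l) * ‖a' - x‖ ≤ (p - l) * ‖a' - a‖ + (p - l) * ‖x - a‖ := by
        rw [← mul_add, norm_sub_rev x]
        exact mul_le_mul_of_nonneg_left (norm_sub_le_norm_sub_add_norm_sub ..) (by linarith)
    _ ≤ _ := add_le_add (hf.mul_norm_sub_le_mul_norm_sub hl ha ha')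
        (hf.mul_norm_sub_le_norm_gradx_fhat hl ha x)

theorem inner_grady_sub_le_fhat_sub (hf : IsLSmooth l f) (hl : 0 ≤ l) {p : ℝ} {a z : 𝔼 d1}
    {b : 𝔼 d2} (hmin : ∀ x, fhat f p a b z ≤ fhat f p x b z) (a' : 𝔼 d1) (v : 𝔼 d2) :
    ⟪grady f a' b, v⟫ - l / 2 * ‖v‖ ^ 2 ≤ fhat f p a' (b + v) z - fhat f p a b z := by
  have h := (abs_le.1 (hf.abs_sub_sub_inner_le hl a' 0 b v)).1
  have hmin' := hmin a'
  simp only [add_zero, inner_zero_right, zero_add, norm_zero] at h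
  simp only [fhat] at hmin' ⊢
  linarith

theorem fhat_gradient_step_le (hf : IsLSmooth l f) (hl : 0 ≤ l) (p ηx ηy : ℝ) (x z : 𝔼 d1)
    (y : 𝔼 d2) :
    fhat f p (x - ηx • (gradx f x y + p • (x - z))) (y + ηy • grady f x y) z
      ≤ fhat f p x y z - ηx * ‖gradx f x y + p • (x - z)‖ ^ 2 + ηy * ‖grady f x y‖ ^ 2
        + l / 2 * (ηx ^ 2 * ‖gradx f x y + p • (x - z)‖ ^ 2 + ηy ^ 2 * ‖grady f x y‖ ^ 2)
        + p / 2 * (ηx ^ 2 * ‖gradx f x y + p • (x - z)‖ ^ 2) := by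
  have h := hf.fhat_add_le hl p x (-ηx • (gradx f x y + p • (x - z))) z y (ηy • grady f x y)
  simp only [inner_smul_right, real_inner_self_eq_norm_sq, norm_smul, mul_pow, Real.norm_eq_abs,
    sq_abs, neg_sq] at h
  rw [sub_eq_add_neg x, ← neg_smul]
  linarith

theorem fhat_xstar_gradient_step_ge (hf : IsLSmooth l f) (hl : 0 < l) {xstar : 𝔼 d2 → 𝔼 d1}
    {z : 𝔼 d1} (hxstar : ∀ y x, fhat f (2 * l) (xstar y) y z ≤ fhat f (2 * l) x y z) {ηy : ℝ}
    (hηy : 0 ≤ ηy) (x : 𝔼 d1) (y : 𝔼 d2) :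
    ηy * ‖grady f x y‖ ^ 2
        - ηy * ‖grady f x y‖ * (l * ηy * ‖grady f x y‖ + ‖gradx f x y + (2 * l) • (x - z)‖)
        - l / 2 * (ηy ^ 2 * ‖grady f x y‖ ^ 2)
      ≤ fhat f (2 * l) (xstar (y + ηy • grady f x y)) (y + ηy • grady f x y) z
        - fhat f (2 * l) (xstar y) y z := by
  set y' := y + ηy • grady f x y
  have hstat : ∀ b, gradx f (xstar b) b + (2 * l) • (xstar b - z) = 0 := fun b =>
    hf.gradx_add_smul_eq_zero_of_forall_le hl.le (by linarith) (hxstar b)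
  have hdist := hf.mul_norm_sub_le_add_norm_gradx_fhat hl.le (by linarith) (hstat y) (hstat y') x
  rw [show 2 * l - l = l by ring, show y' - y = ηy • grady f x y by simp [y'], norm_smul,
    Real.norm_eq_abs, abs_of_nonneg hηy] at hdist
  have hlip := hf.norm_grady_sub_grady_le_left hl.le (xstar y') x y
  have hinner : ηy * ‖grady f x y‖ ^ 2
        - ηy * ‖grady f x y‖ * (l * ηy * ‖grady f x y‖ + ‖gradx f x y + (2 * l) • (x - z)‖)
      ≤ ⟪grady f (xstar y') y, ηy • grady f x y⟫ := by
    have hcs := real_inner_le_norm (grady f x y - grady f (xstar y') y) (grady f x y)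
    rw [inner_sub_left, real_inner_self_eq_norm_sq, norm_sub_rev] at hcs
    rw [real_inner_smul_right]
    have := mul_le_mul_of_nonneg_left (hlip.trans hdist)
      (mul_nonneg hηy (norm_nonneg (grady f x y)))
    nlinarith [norm_nonneg (grady f x y)]
  have hpsi := hf.inner_grady_sub_le_fhat_sub hl.le (hxstar y) (xstar y') (ηy • grady f x y)
  rw [norm_smul, Real.norm_eq_abs, abs_of_nonneg hηy, mul_pow] at hpsi
  linarith

end IsLSmooth

/-- joint descent of `f̂ − 2Ψ`, unconstrained case: with `p = 2l`,
`0 < η_x ≤ 1/(1000l)`, `η_y = η_x/256`, `x' = x − η_x ∇_x f̂(x,y,z)`, `y' = y + η_y ∇_y f(x,y)`,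
`f̂(x,y,z) − f̂(x',y',z) + 2(Ψ(y',z) − Ψ(y,z)) ≥ (η_x/8)‖∇_x f̂(x,y,z)‖² + (η_y/8)‖∇_y f(x,y)‖²`,
where `Ψ(y,z) = f̂(x*(y,z),y,z)`. -/
theorem statement11 {d1 d2 : ℕ} (l ηx ηy : ℝ) (hl : 0 < l)
    (hηx : 0 < ηx) (hηx' : ηx ≤ 1 / (1000 * l)) (hηy : ηy = ηx / 256)
    (f : EuclideanSpace ℝ (Fin d1) → EuclideanSpace ℝ (Fin d2) → ℝ)
    (hf : IsLSmooth l f)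
    (xstar : EuclideanSpace ℝ (Fin d2) → EuclideanSpace ℝ (Fin d1) → EuclideanSpace ℝ (Fin d1))
    (hxstar : ∀ y z x, fhat f (2 * l) (xstar y z) y z ≤ fhat f (2 * l) x y z)
    (x z : EuclideanSpace ℝ (Fin d1)) (y : EuclideanSpace ℝ (Fin d2))
    (x' : EuclideanSpace ℝ (Fin d1))
    (hx' : x' = x - ηx • (gradx f x y + (2 * l) • (x - z)))
    (y' : EuclideanSpace ℝ (Fin d2))
    (hy' : y' = y + ηy • grady f x y) :
    fhat f (2 * l) x y z - fhat f (2 * l) x' y' z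
        + 2 * (fhat f (2 * l) (xstar y' z) y' z - fhat f (2 * l) (xstar y z) y z)
      ≥ ηx / 8 * ‖gradx f x y + (2 * l) • (x - z)‖ ^ 2
        + ηy / 8 * ‖grady f x y‖ ^ 2 := by
  subst hx' hy' hηy
  have hdescent := hf.fhat_gradient_step_le hl.le (2 * l) ηx (ηx / 256) x z y
  have hascent := hf.fhat_xstar_gradient_step_ge hl (fun y => hxstar y z) (ηy := ηx / 256)
    (by positivity) x y
  have hlηx : l * ηx ≤ 1 / 1000 := by
    rw [le_div_iff₀ (by positivity)] at hηx'
    linarith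
  set A := ‖gradx f x y + (2 * l) • (x - z)‖
  set B := ‖grady f x y‖
  nlinarith [mul_le_mul_of_nonneg_right hlηx (mul_nonneg hηx.le (sq_nonneg A)),
    mul_le_mul_of_nonneg_right hlηx (mul_nonneg hηx.le (sq_nonneg B)),
    mul_nonneg hηx.le (sq_nonneg (2 * A - B / 2)), mul_nonneg hηx.le (sq_nonneg A),
    mul_nonneg hηx.le (sq_nonneg B)]
end
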